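/- Over the field of rational functions in x, X, y with x ≠ X, the closed form T(p,q) = ((x^p − X^p)/(x−X))(x+X)x^{q-1}y + ((x^{q-p-1} − X^{q-p-1})/(x−X))x^p X^{p+1}y + ((x^{p-2} − X^{p-2})/(x−X))((x^q − X^q)/(x−X))x²y² + ((x^q − X^q)/(x−X))(x+X)X^{p-2}y² + x^{p+q-1}Y is symmetric in p and q: T(p,q) = T(q,p) for all integers p, q. -/

import Mathlib

/-!
Write `[n] = (x ^ n - X ^ n) / (x - X)`. Multiplied by `x - X`, the coefficient of `y` becomes
`x ^ (p + q) + x ^ (p + q - 1) * X - x ^ p * X ^ q - x ^ q * X ^ p`, and the recurrence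
`[p] = [p - 2] * x ^ 2 + (x + X) * X ^ (p - 2)` turns the coefficient of `y ^ 2` into `[p] * [q]`.
Both are symmetric in `p` and `q`, as is the coefficient `x ^ (p + q - 1)` of `Y`.
-/

section

variable {K : Type*} [Field K] {x X : K}

theorem zpow_sub_zpow_div_sub_eq_sub_two (hx : x ≠ 0) (hX : X ≠ 0) (hxX : x - X ≠ 0) (n : ℤ) :
    (x ^ (n - 2) - X ^ (n - 2)) / (x - X) * x ^ 2 + (x + X) * X ^ (n - 2)
      = (x ^ n - X ^ n) / (x - X) := by
  simp only [zpow_sub₀ hx, zpow_sub₀ hX]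
  field_simp
  ring

theorem linearCoeff_eq (hx : x ≠ 0) (hX : X ≠ 0) (hxX : x - X ≠ 0) (p q : ℤ) :
    (x ^ p - X ^ p) / (x - X) * (x + X) * x ^ (q - 1)
      + (x ^ (q - p - 1) - X ^ (q - p - 1)) / (x - X) * x ^ p * X ^ (p + 1)
      = (x ^ (p + q) + x ^ (p + q - 1) * X - x ^ p * X ^ q - x ^ q * X ^ p) / (x - X) := by
  simp only [zpow_sub₀ hx, zpow_sub₀ hX, zpow_add₀ hx, zpow_add₀ hX, zpow_one]
  field_simp
  ring

theorem closedForm_eq (hx : x ≠ 0) (hX : X ≠ 0) (hxX : x - X ≠ 0) (y Y : K) (p q : ℤ) :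
    (x ^ p - X ^ p) / (x - X) * (x + X) * x ^ (q - 1) * y
        + (x ^ (q - p - 1) - X ^ (q - p - 1)) / (x - X) * x ^ p * X ^ (p + 1) * y
        + (x ^ (p - 2) - X ^ (p - 2)) / (x - X) * ((x ^ q - X ^ q) / (x - X)) * x ^ 2 * y ^ 2
        + (x ^ q - X ^ q) / (x - X) * (x + X) * X ^ (p - 2) * y ^ 2
        + x ^ (p + q - 1) * Y
      = (x ^ (p + q) + x ^ (p + q - 1) * X - x ^ p * X ^ q - x ^ q * X ^ p) / (x - X) * y
        + (x ^ p - X ^ p) / (x - X) * ((x ^ q - X ^ q) / (x - X)) * y ^ 2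
        + x ^ (p + q - 1) * Y := by
  rw [← linearCoeff_eq hx hX hxX, ← zpow_sub_zpow_div_sub_eq_sub_two hx hX hxX p]
  ring

end

theorem stmt_14 {K : Type*} [Field K] (x X y Y : K)
    (hx : x ≠ 0) (hX : X ≠ 0) (hxX : x ≠ X)
    (T : ℤ → ℤ → K)
    (hT : ∀ p q : ℤ,
      T p q =
        (x ^ p - X ^ p) / (x - X) * (x + X) * x ^ (q - 1) * y
        + (x ^ (q - p - 1) - X ^ (q - p - 1)) / (x - X) * x ^ p * X ^ (p + 1) * y
        + (x ^ (p - 2) - X ^ (p - 2)) / (x - X) * ((x ^ q - X ^ q) / (x - X)) * x ^ 2 * y ^ 2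
        + (x ^ q - X ^ q) / (x - X) * (x + X) * X ^ (p - 2) * y ^ 2
        + x ^ (p + q - 1) * Y) :
    ∀ p q : ℤ, T p q = T q p := by
  intro p q
  have hsub : x - X ≠ 0 := sub_ne_zero.mpr hxX
  rw [hT, hT, closedForm_eq hx hX hsub, closedForm_eq hx hX hsub, add_comm q p]
  ring
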